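/- arXiv:0912.4357 — 3 statements merged into one kernel-verified Lean document; each statement's English description precedes it below -/
import Mathlib

section
/- For every integer N≥1 and every f∈V_{h,N}, one has R_{N−1}(L_N f) = D_N f − (1−q^{−N})(A_h q^{N+h−1}−1)·f. -/
open Finset

noncomputable section

/-- q-shifted factorial `(a;q)_m`. -/
def qPoch (q a : ℝ) (m : ℕ) : ℝ := ∏ k ∈ Finset.range m, (1 - a * q ^ k)

/-- Partial sum `X_k = x_1 + ⋯ + x_k` (entries of index `< k`, 0-indexed). -/
def Xlt {h : ℕ} (x : Fin h → ℕ) (k : ℕ) : ℕ := ∑ j : Fin h, if (j : ℕ) < k then x j else 0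

/-- Partial product `A_k = α_1 ⋯ α_k` (entries of index `< k`, 0-indexed). -/
def Apar {h : ℕ} (α : Fin h → ℝ) (k : ℕ) : ℝ := ∏ j : Fin h, if (j : ℕ) < k then α j else 1

/-- Raising operator `R_N : V_{h,N} → V_{h,N+1}`. -/
def Rop (q : ℝ) {h : ℕ} (N : ℕ) (f : (Fin h → ℕ) → ℂ) : (Fin h → ℕ) → ℂ := fun x =>
  ∑ i : Fin h, (q : ℂ) ^ ((Xlt x i : ℤ) - N - 1) * (1 - (q : ℂ) ^ (x i)) *
    f (Function.update x i (x i - 1))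

/-- Lowering operator `L_N : V_{h,N} → V_{h,N-1}` (its defining formula does not involve `N`). -/
def Lop (q : ℝ) {h : ℕ} (α : Fin h → ℝ) (f : (Fin h → ℕ) → ℂ) : (Fin h → ℕ) → ℂ := fun x =>
  ∑ j : Fin h, ((Apar α j : ℝ) : ℂ) * (q : ℂ) ^ ((j : ℕ) + Xlt x j) *
    ((α j : ℂ) * (q : ℂ) ^ (x j + 1) - 1) * f (Function.update x j (x j + 1))

/-- The multidimensional q-Hahn operator `D_N : V_{h,N} → V_{h,N}`. -/
def Dop (q : ℝ) {h : ℕ} (α : Fin h → ℝ) (N : ℕ) (f : (Fin h → ℕ) → ℂ) : (Fin h → ℕ) → ℂ :=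
  fun x =>
    (∑ i : Fin h, ∑ j : Fin h,
      if i ≠ j then
        ((Apar α j : ℝ) : ℂ) *
          (q : ℂ) ^ ((((j : ℕ) + Xlt x j + Xlt x i : ℕ) : ℤ) - N -
            (if (i : ℕ) < (j : ℕ) then 1 else 0)) *
          ((α j : ℂ) * (q : ℂ) ^ (x j + 1) - 1) * (1 - (q : ℂ) ^ (x i)) *
          f (Function.update (Function.update x j (x j + 1)) i (x i - 1))
      else 0)
    + ((∑ j : Fin h,
          ((Apar α j : ℝ) : ℂ) * (q : ℂ) ^ ((((j : ℕ) + 2 * Xlt x j : ℕ) : ℤ) - N) *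
            ((α j : ℂ) * (q : ℂ) ^ (x j) - 1) * (1 - (q : ℂ) ^ (x j)))
        + (((Apar α h : ℝ) : ℂ) * (q : ℂ) ^ (((h + N : ℕ) : ℤ) - 1) - 1) *
            (1 - (q : ℂ) ^ (-(N : ℤ)))) * f x

/-- Scalar product on `V_{h,N}`. -/
def innerV (q : ℝ) {h : ℕ} (α : Fin h → ℝ) (N : ℕ) (f g : (Fin h → ℕ) → ℂ) : ℂ :=
  (q : ℂ) ^ (N * (N + 1) / 2) *
    ∑ x ∈ Finset.Nat.antidiagonalTuple h N,
      (∏ i : Fin h, ((qPoch q (q * α i) (x i) / qPoch q q (x i) : ℝ) : ℂ) *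
        ((α i * q : ℝ) : ℂ) ^ ((N : ℤ) - Xlt x ((i : ℕ) + 1))) *
      f x * (starRingEnd ℂ) (g x)

/-- `RopIter q n k f = R_{n+k-1} ⋯ R_{n+1} R_n f`. -/
def RopIter (q : ℝ) {h : ℕ} (n : ℕ) : ℕ → ((Fin h → ℕ) → ℂ) → ((Fin h → ℕ) → ℂ)
  | 0, f => f
  | k + 1, f => Rop q (n + k) (RopIter q n k f)

lemma xlt_update {h : ℕ} (x : Fin h → ℕ) (i : Fin h) (v k : ℕ) :
    Xlt (Function.update x i v) k + (if (i : ℕ) < k then x i else 0)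
      = Xlt x k + (if (i : ℕ) < k then v else 0) := by
  unfold Xlt
  have hfun : (fun j : Fin h => if (j : ℕ) < k then Function.update x i v j else 0)
      = Function.update (fun j : Fin h => if (j : ℕ) < k then x j else 0) i
          (if (i : ℕ) < k then v else 0) := by
    funext j
    rcases eq_or_ne j i with rfl | hj
    · simp
    · simp [Function.update_of_ne hj]
  rw [hfun, Finset.sum_update_of_mem (Finset.mem_univ i),
    Finset.sum_eq_sum_sdiff_singleton_add (Finset.mem_univ i)
      (fun j : Fin h => if (j : ℕ) < k then x j else 0)]
  ring

theorem stmt0 (q : ℝ) (hq0 : 0 < q) (hq1 : q < 1) (h : ℕ) (hh : 1 ≤ h)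
    (α : Fin h → ℝ) (hα : ∀ i, 0 < α i) (N : ℕ) (hN : 1 ≤ N)
    (f : (Fin h → ℕ) → ℂ) (x : Fin h → ℕ) (hx : (∑ i, x i) = N) :
    Rop q (N - 1) (Lop q α f) x =
      Dop q α N f x -
        (1 - (q : ℂ) ^ (-(N : ℤ))) *
          (((Apar α h : ℝ) : ℂ) * (q : ℂ) ^ (((N + h : ℕ) : ℤ) - 1) - 1) * f x := by
  have hq : (q : ℂ) ≠ 0 := by exact_mod_cast hq0.ne'
  simp only [Rop, Lop, Dop]
  rw [add_mul, Finset.sum_mul]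
  simp only [Finset.mul_sum]
  have key : ∀ i : Fin h,
      (∑ j : Fin h, (q : ℂ) ^ ((Xlt x i : ℤ) - (N - 1 : ℕ) - 1) * (1 - (q : ℂ) ^ (x i)) *
        (((Apar α j : ℝ) : ℂ) *
          (q : ℂ) ^ ((j : ℕ) + Xlt (Function.update x i (x i - 1)) j) *
          ((α j : ℂ) * (q : ℂ) ^ (Function.update x i (x i - 1) j + 1) - 1) *
          f (Function.update (Function.update x i (x i - 1)) j
              (Function.update x i (x i - 1) j + 1))))
      = (∑ j : Fin h,
          if i ≠ j then
            ((Apar α j : ℝ) : ℂ) *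
              (q : ℂ) ^ ((((j : ℕ) + Xlt x j + Xlt x i : ℕ) : ℤ) - N -
                (if (i : ℕ) < (j : ℕ) then 1 else 0)) *
              ((α j : ℂ) * (q : ℂ) ^ (x j + 1) - 1) * (1 - (q : ℂ) ^ (x i)) *
              f (Function.update (Function.update x j (x j + 1)) i (x i - 1))
          else 0)
        + ((Apar α i : ℝ) : ℂ) * (q : ℂ) ^ ((((i : ℕ) + 2 * Xlt x i : ℕ) : ℤ) - N) *
            ((α i : ℂ) * (q : ℂ) ^ (x i) - 1) * (1 - (q : ℂ) ^ (x i)) * f x := by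
    intro i
    have hdiag : (((Apar α i : ℝ) : ℂ) * (q : ℂ) ^ ((((i : ℕ) + 2 * Xlt x i : ℕ) : ℤ) - N) *
        ((α i : ℂ) * (q : ℂ) ^ (x i) - 1) * (1 - (q : ℂ) ^ (x i)) * f x)
        = ∑ j : Fin h, if i = j then
            ((Apar α i : ℝ) : ℂ) * (q : ℂ) ^ ((((i : ℕ) + 2 * Xlt x i : ℕ) : ℤ) - N) *
            ((α i : ℂ) * (q : ℂ) ^ (x i) - 1) * (1 - (q : ℂ) ^ (x i)) * f x else 0 := by
      rw [Finset.sum_ite_eq]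
      simp
    rw [hdiag, ← Finset.sum_add_distrib]
    apply Finset.sum_congr rfl
    intro j _
    by_cases hxi : x i = 0
    · simp [hxi]
    · have hxi1 : 1 ≤ x i := Nat.one_le_iff_ne_zero.mpr hxi
      rcases eq_or_ne i j with rfl | hij
      · -- diagonal term
        simp only [ne_eq, not_true_eq_false, if_false, if_true, zero_add]
        have hyj : Xlt (Function.update x i (x i - 1)) i = Xlt x i := by
          have := xlt_update x i (x i - 1) i
          simpa using this
        have harg : Function.update (Function.update x i (x i - 1)) i
            (Function.update x i (x i - 1) i + 1) = x := by
          simp only [Function.update_self, Function.update_idem]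
          rw [Nat.sub_add_cancel hxi1]
          exact Function.update_eq_self i x
        have hval : Function.update x i (x i - 1) i + 1 = x i := by
          simp only [Function.update_self]
          exact Nat.sub_add_cancel hxi1
        rw [harg, hyj, hval]
        have hexp : (q : ℂ) ^ ((Xlt x i : ℤ) - (N - 1 : ℕ) - 1) *
            (q : ℂ) ^ ((i : ℕ) + Xlt x i)
            = (q : ℂ) ^ ((((i : ℕ) + 2 * Xlt x i : ℕ) : ℤ) - N) := by
          rw [← zpow_natCast (q : ℂ) ((i : ℕ) + Xlt x i), ← zpow_add₀ hq]
          congr 1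
          omega
        rw [← hexp]
        ring
      · -- off-diagonal term
        simp only [hij, if_true, Ne.symm hij, if_false, add_zero, ne_eq, not_false_iff]
        have hyj : Function.update x i (x i - 1) j = x j :=
          Function.update_of_ne (Ne.symm hij) _ _
        have harg : Function.update (Function.update x i (x i - 1)) j
            (Function.update x i (x i - 1) j + 1)
            = Function.update (Function.update x j (x j + 1)) i (x i - 1) := by
          rw [hyj]
          exact Function.update_comm hij _ _ _
        have hXy := xlt_update x i (x i - 1) j
        have hexp : (q : ℂ) ^ ((((j : ℕ) + Xlt x j + Xlt x i : ℕ) : ℤ) - N -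
              (if (i : ℕ) < (j : ℕ) then 1 else 0))
            = (q : ℂ) ^ ((Xlt x i : ℤ) - (N - 1 : ℕ) - 1) *
              (q : ℂ) ^ ((j : ℕ) + Xlt (Function.update x i (x i - 1)) j) := by
          rw [← zpow_natCast (q : ℂ) ((j : ℕ) + Xlt (Function.update x i (x i - 1)) j),
            ← zpow_add₀ hq]
          congr 1
          by_cases hlt : (i : ℕ) < (j : ℕ) <;> simp only [hlt, if_true, if_false] at hXy ⊢ <;>
            omega
        rw [harg, hyj, hexp]
        ring
  rw [Finset.sum_congr rfl (fun i _ => key i), Finset.sum_add_distrib]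
  rw [Nat.add_comm h N]
  ring
end
end

section
/- For every integer N≥0 and every f∈V_{h,N}, one has L_{N+1}(R_N f) = D_N f − (1−q^{−N−1})(A_h q^{N+h}−1)·f. Consequently, for N≥1 and f∈V_{h,N}, L_{N+1}(R_N f) − R_{N−1}(L_N f) = q^{−N−1}(1−q)(A_h q^{2N+h}−1)·f. -/
open Finset

noncomputable section

/- ------------------ helpers ------------------- -/

lemma Xlt_update {h : ℕ} (x : Fin h → ℕ) (j : Fin h) (v : ℕ) (k : ℕ) :
    Xlt (Function.update x j v) k + (if (j : ℕ) < k then x j else 0)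
      = Xlt x k + (if (j : ℕ) < k then v else 0) := by
  unfold Xlt
  rw [← Finset.sum_erase_add _ _ (Finset.mem_univ j),
      ← Finset.sum_erase_add Finset.univ (fun j' : Fin h => if (j':ℕ) < k then x j' else 0)
        (Finset.mem_univ j)]
  have : ∀ j' ∈ Finset.univ.erase j,
      (if (j' : ℕ) < k then Function.update x j v j' else 0)
        = (if (j' : ℕ) < k then x j' else 0) := by
    intro j' hj'
    rw [Function.update_of_ne (Finset.ne_of_mem_erase hj')]
  rw [Finset.sum_congr rfl this, Function.update_self]
  ring

lemma Xlt_zero {h : ℕ} (x : Fin h → ℕ) : Xlt x 0 = 0 := by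
  simp [Xlt]

lemma Xlt_top {h : ℕ} (x : Fin h → ℕ) : Xlt x h = ∑ i, x i := by
  unfold Xlt
  exact Finset.sum_congr rfl fun j _ => by simp [j.isLt]

lemma Xlt_succ {h : ℕ} (x : Fin h → ℕ) (j : Fin h) :
    Xlt x ((j : ℕ) + 1) = Xlt x j + x j := by
  unfold Xlt
  have : ∀ j' : Fin h, (if (j' : ℕ) < (j : ℕ) + 1 then x j' else 0)
      = (if (j' : ℕ) < (j : ℕ) then x j' else 0) + (if j' = j then x j' else 0) := by
    intro j'
    rcases lt_trichotomy (j' : ℕ) (j : ℕ) with hc | hc | hc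
    · have h3 : j' ≠ j := Fin.ne_of_lt hc
      simp [hc, Nat.lt_succ_of_lt hc, h3]
    · have : j' = j := Fin.ext hc
      simp [this]
    · have h1 : ¬ ((j':ℕ) < (j:ℕ) + 1) := by omega
      have h2 : ¬ ((j':ℕ) < (j:ℕ)) := by omega
      have h3 : j' ≠ j := Fin.ne_of_gt hc
      simp [h1, h2, h3]
  rw [Finset.sum_congr rfl fun j' _ => this j', Finset.sum_add_distrib,
    Finset.sum_ite_eq' Finset.univ j x]
  simp

lemma Apar_zero {h : ℕ} (α : Fin h → ℝ) : Apar α 0 = 1 := by simp [Apar]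

lemma Apar_succ {h : ℕ} (α : Fin h → ℝ) (j : Fin h) :
    Apar α ((j : ℕ) + 1) = Apar α j * α j := by
  unfold Apar
  have : ∀ j' : Fin h, (if (j' : ℕ) < (j : ℕ) + 1 then α j' else 1)
      = (if (j' : ℕ) < (j : ℕ) then α j' else 1) * (if j' = j then α j' else 1) := by
    intro j'
    rcases lt_trichotomy (j' : ℕ) (j : ℕ) with hc | hc | hc
    · have h3 : j' ≠ j := Fin.ne_of_lt hc
      simp [hc, Nat.lt_succ_of_lt hc, h3]
    · have : j' = j := Fin.ext hc
      simp [this]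
    · have h1 : ¬ ((j':ℕ) < (j:ℕ) + 1) := by omega
      have h2 : ¬ ((j':ℕ) < (j:ℕ)) := by omega
      have h3 : j' ≠ j := Fin.ne_of_gt hc
      simp [h1, h2, h3]
  rw [Finset.prod_congr rfl fun j' _ => this j', Finset.prod_mul_distrib,
    Finset.prod_ite_eq' Finset.univ j α]
  simp

lemma sum_split {M : Type*} [AddCommMonoid M] {n : ℕ} (t : Fin n → Fin n → M) :
    (∑ j, ∑ i, t j i) = (∑ j, t j j) + ∑ j, ∑ i, (if i ≠ j then t j i else 0) := by
  classical
  have key : ∀ j i : Fin n, t j i = (if i = j then t j i else 0) + (if i ≠ j then t j i else 0) := by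
    intro j i; by_cases hc : i = j <;> simp [hc]
  calc (∑ j, ∑ i, t j i)
      = ∑ j, ∑ i, ((if i = j then t j i else 0) + (if i ≠ j then t j i else 0)) := by
        exact Finset.sum_congr rfl fun j _ => Finset.sum_congr rfl fun i _ => key j i
    _ = ∑ j, ((∑ i, if i = j then t j i else 0) + ∑ i, (if i ≠ j then t j i else 0)) := by
        exact Finset.sum_congr rfl fun j _ => Finset.sum_add_distrib
    _ = (∑ j, t j j) + ∑ j, ∑ i, (if i ≠ j then t j i else 0) := by
        rw [← Finset.sum_add_distrib]
        refine Finset.sum_congr rfl fun j _ => ?_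
        rw [Finset.sum_ite_eq' Finset.univ j (t j)]
        simp

/-- B-function for telescoping. -/
def Bfun (q : ℝ) {h : ℕ} (α : Fin h → ℝ) (x : Fin h → ℕ) (k : ℕ) : ℂ :=
  ((Apar α k : ℝ) : ℂ) * (q : ℂ) ^ (2 * Xlt x k + k)

/- main Lemma A -/
lemma lemA (q : ℝ) (hq : (q:ℂ) ≠ 0) {h : ℕ} (α : Fin h → ℝ) (N : ℕ)
    (f : (Fin h → ℕ) → ℂ) (x : Fin h → ℕ) (hx : (∑ i, x i) = N) :
    Lop q α (Rop q N f) x = Dop q α N f x -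
      (1 - (q : ℂ) ^ (-(N : ℤ) - 1)) *
        (((Apar α h : ℝ) : ℂ) * (q : ℂ) ^ (N + h) - 1) * f x := by
  classical
  have hm : (q:ℂ) ^ (-(N:ℤ) - 1) = ((q:ℂ)^N * q)⁻¹ := by
    rw [show -(N:ℤ) - 1 = -((N:ℤ) + 1) by ring, zpow_neg, zpow_add₀ hq, zpow_natCast, zpow_one]
  have hmN : (q:ℂ) ^ (-(N:ℤ)) = ((q:ℂ)^N)⁻¹ := by
    rw [zpow_neg, zpow_natCast]
  -- the off-diagonal pairwise identity
  have pair : ∀ i j : Fin h, i ≠ j →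
      ((Apar α (j:ℕ) : ℝ):ℂ) * (q:ℂ) ^ ((j:ℕ) + Xlt x (j:ℕ)) *
        ((α j : ℂ) * (q:ℂ) ^ (x j + 1) - 1) *
        ((q:ℂ) ^ ((Xlt (Function.update x j (x j + 1)) (i:ℕ) : ℤ) - N - 1) *
          (1 - (q:ℂ) ^ Function.update x j (x j + 1) i) *
          f (Function.update (Function.update x j (x j + 1)) i
              (Function.update x j (x j + 1) i - 1)))
      = ((Apar α (j:ℕ) : ℝ):ℂ) *
          (q:ℂ) ^ ((((j:ℕ) + Xlt x (j:ℕ) + Xlt x (i:ℕ) : ℕ):ℤ) - N -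
            (if (i:ℕ) < (j:ℕ) then 1 else 0)) *
          ((α j : ℂ) * (q:ℂ) ^ (x j + 1) - 1) * (1 - (q:ℂ) ^ (x i)) *
          f (Function.update (Function.update x j (x j + 1)) i (x i - 1)) := by
    intro i j hij
    have hyi : Function.update x j (x j + 1) i = x i := Function.update_of_ne hij _ _
    rw [hyi]
    have hXy : Xlt (Function.update x j (x j + 1)) (i:ℕ)
        = Xlt x (i:ℕ) + (if (j:ℕ) < (i:ℕ) then 1 else 0) := by
      have H := Xlt_update x j (x j + 1) (i:ℕ)
      by_cases hc : (j:ℕ) < (i:ℕ) <;> simp [hc] at H ⊢ <;> omega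
    rw [hXy]
    have hne : (i:ℕ) ≠ (j:ℕ) := fun hc => hij (Fin.ext hc)
    rcases Nat.lt_or_ge (i:ℕ) (j:ℕ) with hc | hc
    · have hc2 : ¬ ((j:ℕ) < (i:ℕ)) := by omega
      rw [if_pos hc, if_neg hc2]
      simp only [Nat.add_zero, zpow_sub₀ hq, zpow_natCast, zpow_one]
      field_simp
      ring
    · have hc1 : (j:ℕ) < (i:ℕ) := by omega
      have hc2 : ¬ ((i:ℕ) < (j:ℕ)) := by omega
      rw [if_pos hc1, if_neg hc2]
      simp only [zpow_sub₀ hq, zpow_natCast, zpow_one]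
      field_simp
      ring
  -- diagonal per-j identity
  have diag : ∀ j : Fin h,
      ((Apar α (j:ℕ) : ℝ):ℂ) * (q:ℂ) ^ ((j:ℕ) + Xlt x (j:ℕ)) *
        ((α j : ℂ) * (q:ℂ) ^ (x j + 1) - 1) *
        ((q:ℂ) ^ ((Xlt (Function.update x j (x j + 1)) (j:ℕ) : ℤ) - N - 1) *
          (1 - (q:ℂ) ^ Function.update x j (x j + 1) j) *
          f (Function.update (Function.update x j (x j + 1)) j
              (Function.update x j (x j + 1) j - 1)))
      = ((Apar α (j:ℕ) : ℝ):ℂ) * (q:ℂ) ^ ((((j:ℕ) + 2 * Xlt x (j:ℕ) : ℕ):ℤ) - N) *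
          ((α j : ℂ) * (q:ℂ) ^ (x j) - 1) * (1 - (q:ℂ) ^ (x j)) * f x
        + (1 - (q:ℂ)) * ((q:ℂ)^N * q)⁻¹ *
            (Bfun q α x ((j:ℕ) + 1) - Bfun q α x (j:ℕ)) * f x := by
    intro j
    have hyj : Function.update x j (x j + 1) j = x j + 1 := Function.update_self _ _ _
    have hXyj : Xlt (Function.update x j (x j + 1)) (j:ℕ) = Xlt x (j:ℕ) := by
      have H := Xlt_update x j (x j + 1) (j:ℕ)
      simp [lt_irrefl] at H
      exact H
    have hupd : Function.update (Function.update x j (x j + 1)) j (x j + 1 - 1) = x := by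
      rw [Function.update_idem]
      simp
    rw [hyj, hXyj, hupd]
    unfold Bfun
    rw [Apar_succ, Xlt_succ]
    simp only [zpow_sub₀ hq, zpow_natCast, zpow_one, Complex.ofReal_mul]
    field_simp
    ring
  -- telescoping
  have tel : ∑ j : Fin h, (Bfun q α x ((j:ℕ) + 1) - Bfun q α x (j:ℕ))
      = Bfun q α x h - Bfun q α x 0 := by
    rw [Fin.sum_univ_eq_sum_range (fun k => Bfun q α x (k + 1) - Bfun q α x k) h]
    exact Finset.sum_range_sub (Bfun q α x) h
  have hB0 : Bfun q α x 0 = 1 := by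
    simp [Bfun, Apar_zero, Xlt_zero]
  have hBh : Bfun q α x h = ((Apar α h : ℝ):ℂ) * (q:ℂ) ^ (2 * N + h) := by
    rw [Bfun, Xlt_top, hx]
  -- scalar identity
  have hscal : (1 - (q:ℂ)) * ((q:ℂ)^N * q)⁻¹ * (((Apar α h : ℝ):ℂ) * (q:ℂ) ^ (2 * N + h) - 1)
      = (((Apar α h : ℝ):ℂ) * (q:ℂ) ^ (((h + N : ℕ):ℤ) - 1) - 1) * (1 - (q:ℂ) ^ (-(N:ℤ)))
        - (1 - (q:ℂ) ^ (-(N:ℤ) - 1)) * (((Apar α h : ℝ):ℂ) * (q:ℂ) ^ (N + h) - 1) := by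
    rw [hm, hmN, zpow_sub₀ hq, zpow_natCast, zpow_one]
    field_simp
    ring
  -- assemble
  calc Lop q α (Rop q N f) x
      = ∑ j : Fin h, ∑ i : Fin h,
          ((Apar α (j:ℕ) : ℝ):ℂ) * (q:ℂ) ^ ((j:ℕ) + Xlt x (j:ℕ)) *
            ((α j : ℂ) * (q:ℂ) ^ (x j + 1) - 1) *
            ((q:ℂ) ^ ((Xlt (Function.update x j (x j + 1)) (i:ℕ) : ℤ) - N - 1) *
              (1 - (q:ℂ) ^ Function.update x j (x j + 1) i) *
              f (Function.update (Function.update x j (x j + 1)) i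
                  (Function.update x j (x j + 1) i - 1))) := by
        simp only [Lop, Rop, Finset.mul_sum]
    _ = (∑ j : Fin h,
          ((Apar α (j:ℕ) : ℝ):ℂ) * (q:ℂ) ^ ((j:ℕ) + Xlt x (j:ℕ)) *
            ((α j : ℂ) * (q:ℂ) ^ (x j + 1) - 1) *
            ((q:ℂ) ^ ((Xlt (Function.update x j (x j + 1)) (j:ℕ) : ℤ) - N - 1) *
              (1 - (q:ℂ) ^ Function.update x j (x j + 1) j) *
              f (Function.update (Function.update x j (x j + 1)) j
                  (Function.update x j (x j + 1) j - 1))))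
        + ∑ j : Fin h, ∑ i : Fin h,
          (if i ≠ j then
            ((Apar α (j:ℕ) : ℝ):ℂ) * (q:ℂ) ^ ((j:ℕ) + Xlt x (j:ℕ)) *
              ((α j : ℂ) * (q:ℂ) ^ (x j + 1) - 1) *
              ((q:ℂ) ^ ((Xlt (Function.update x j (x j + 1)) (i:ℕ) : ℤ) - N - 1) *
                (1 - (q:ℂ) ^ Function.update x j (x j + 1) i) *
                f (Function.update (Function.update x j (x j + 1)) i
                    (Function.update x j (x j + 1) i - 1)))
           else 0) := sum_split _
    _ = ((∑ j : Fin h,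
          (((Apar α (j:ℕ) : ℝ):ℂ) * (q:ℂ) ^ ((((j:ℕ) + 2 * Xlt x (j:ℕ) : ℕ):ℤ) - N) *
            ((α j : ℂ) * (q:ℂ) ^ (x j) - 1) * (1 - (q:ℂ) ^ (x j)) * f x
          + (1 - (q:ℂ)) * ((q:ℂ)^N * q)⁻¹ *
              (Bfun q α x ((j:ℕ) + 1) - Bfun q α x (j:ℕ)) * f x)))
        + ∑ i : Fin h, ∑ j : Fin h,
          (if i ≠ j then
            ((Apar α (j:ℕ) : ℝ):ℂ) *
              (q:ℂ) ^ ((((j:ℕ) + Xlt x (j:ℕ) + Xlt x (i:ℕ) : ℕ):ℤ) - N -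
                (if (i:ℕ) < (j:ℕ) then 1 else 0)) *
              ((α j : ℂ) * (q:ℂ) ^ (x j + 1) - 1) * (1 - (q:ℂ) ^ (x i)) *
              f (Function.update (Function.update x j (x j + 1)) i (x i - 1))
           else 0) := by
        congr 1
        · exact Finset.sum_congr rfl fun j _ => diag j
        · rw [Finset.sum_comm]
          refine Finset.sum_congr rfl fun i _ => Finset.sum_congr rfl fun j _ => ?_
          by_cases hij : i = j
          · simp [hij]
          · rw [if_pos hij, if_pos hij]
            exact pair i j hij
    _ = Dop q α N f x -
          (1 - (q : ℂ) ^ (-(N : ℤ) - 1)) *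
            (((Apar α h : ℝ) : ℂ) * (q : ℂ) ^ (N + h) - 1) * f x := by
        simp only [Dop]
        rw [Finset.sum_add_distrib, ← Finset.sum_mul, ← Finset.sum_mul, ← Finset.mul_sum,
          tel, hB0, hBh]
        linear_combination f x * hscal

/- main Lemma B -/
lemma lemB (q : ℝ) (hq : (q:ℂ) ≠ 0) {h : ℕ} (α : Fin h → ℝ) (N : ℕ) (hN : 1 ≤ N)
    (f : (Fin h → ℕ) → ℂ) (x : Fin h → ℕ) (hx : (∑ i, x i) = N) :
    Rop q (N - 1) (Lop q α f) x = Dop q α N f x -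
      (((Apar α h : ℝ) : ℂ) * (q : ℂ) ^ (((h + N : ℕ) : ℤ) - 1) - 1) *
        (1 - (q : ℂ) ^ (-(N : ℤ))) * f x := by
  classical
  obtain ⟨M, rfl⟩ : ∃ M, N = M + 1 := ⟨N - 1, by omega⟩
  have hM : M + 1 - 1 = M := by omega
  rw [hM]
  -- off-diagonal pairwise identity
  have pair : ∀ i j : Fin h, j ≠ i →
      (q:ℂ) ^ ((Xlt x (i:ℕ) : ℤ) - M - 1) * (1 - (q:ℂ) ^ (x i)) *
        (((Apar α (j:ℕ) : ℝ):ℂ) *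
          (q:ℂ) ^ ((j:ℕ) + Xlt (Function.update x i (x i - 1)) (j:ℕ)) *
          ((α j : ℂ) * (q:ℂ) ^ (Function.update x i (x i - 1) j + 1) - 1) *
          f (Function.update (Function.update x i (x i - 1)) j
              (Function.update x i (x i - 1) j + 1)))
      = ((Apar α (j:ℕ) : ℝ):ℂ) *
          (q:ℂ) ^ ((((j:ℕ) + Xlt x (j:ℕ) + Xlt x (i:ℕ) : ℕ):ℤ) - (M + 1 : ℕ) -
            (if (i:ℕ) < (j:ℕ) then 1 else 0)) *
          ((α j : ℂ) * (q:ℂ) ^ (x j + 1) - 1) * (1 - (q:ℂ) ^ (x i)) *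
          f (Function.update (Function.update x j (x j + 1)) i (x i - 1)) := by
    intro i j hji
    have hij : i ≠ j := hji.symm
    by_cases hx0 : x i = 0
    · simp [hx0]
    · have hx1 : 1 ≤ x i := by omega
      have hz : Function.update x i (x i - 1) j = x j := Function.update_of_ne hji _ _
      rw [hz, Function.update_comm hij (x i - 1) (x j + 1) x]
      have H := Xlt_update x i (x i - 1) (j:ℕ)
      rcases Nat.lt_or_ge (i:ℕ) (j:ℕ) with hc | hc
      · have hc2 : ¬ ((j:ℕ) < (i:ℕ)) := by omega
        have hXx : Xlt x (j:ℕ) = Xlt (Function.update x i (x i - 1)) (j:ℕ) + 1 := by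
          simp [hc] at H; omega
        rw [if_pos hc, hXx]
        simp only [zpow_sub₀ hq, zpow_natCast, zpow_one]
        field_simp
        ring
      · have hc1 : ¬ ((i:ℕ) < (j:ℕ)) := by omega
        have hXx : Xlt x (j:ℕ) = Xlt (Function.update x i (x i - 1)) (j:ℕ) := by
          simp [hc1] at H; omega
        rw [if_neg hc1, hXx]
        simp only [zpow_sub₀ hq, zpow_natCast, zpow_one]
        field_simp
        ring
  -- diagonal identity
  have diag : ∀ i : Fin h,
      (q:ℂ) ^ ((Xlt x (i:ℕ) : ℤ) - M - 1) * (1 - (q:ℂ) ^ (x i)) *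
        (((Apar α (i:ℕ) : ℝ):ℂ) *
          (q:ℂ) ^ ((i:ℕ) + Xlt (Function.update x i (x i - 1)) (i:ℕ)) *
          ((α i : ℂ) * (q:ℂ) ^ (Function.update x i (x i - 1) i + 1) - 1) *
          f (Function.update (Function.update x i (x i - 1)) i
              (Function.update x i (x i - 1) i + 1)))
      = ((Apar α (i:ℕ) : ℝ):ℂ) *
          (q:ℂ) ^ ((((i:ℕ) + 2 * Xlt x (i:ℕ) : ℕ):ℤ) - (M + 1 : ℕ)) *
          ((α i : ℂ) * (q:ℂ) ^ (x i) - 1) * (1 - (q:ℂ) ^ (x i)) * f x := by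
    intro i
    by_cases hx0 : x i = 0
    · simp [hx0]
    · have hx1 : 1 ≤ x i := by omega
      have hzi : Function.update x i (x i - 1) i = x i - 1 := Function.update_self _ _ _
      have hXzi : Xlt (Function.update x i (x i - 1)) (i:ℕ) = Xlt x (i:ℕ) := by
        have H := Xlt_update x i (x i - 1) (i:ℕ)
        simp [lt_irrefl] at H
        exact H
      have hsucc : x i - 1 + 1 = x i := by omega
      have hupd : Function.update (Function.update x i (x i - 1)) i (x i - 1 + 1) = x := by
        rw [Function.update_idem, hsucc, Function.update_eq_self]
      rw [hzi, hXzi, hupd, hsucc]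
      simp only [zpow_sub₀ hq, zpow_natCast, zpow_one]
      field_simp
      ring
  calc Rop q M (Lop q α f) x
      = ∑ i : Fin h, ∑ j : Fin h,
          (q:ℂ) ^ ((Xlt x (i:ℕ) : ℤ) - M - 1) * (1 - (q:ℂ) ^ (x i)) *
            (((Apar α (j:ℕ) : ℝ):ℂ) *
              (q:ℂ) ^ ((j:ℕ) + Xlt (Function.update x i (x i - 1)) (j:ℕ)) *
              ((α j : ℂ) * (q:ℂ) ^ (Function.update x i (x i - 1) j + 1) - 1) *
              f (Function.update (Function.update x i (x i - 1)) j
                  (Function.update x i (x i - 1) j + 1))) := by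
        simp only [Rop, Lop, Finset.mul_sum]
    _ = (∑ i : Fin h,
          (q:ℂ) ^ ((Xlt x (i:ℕ) : ℤ) - M - 1) * (1 - (q:ℂ) ^ (x i)) *
            (((Apar α (i:ℕ) : ℝ):ℂ) *
              (q:ℂ) ^ ((i:ℕ) + Xlt (Function.update x i (x i - 1)) (i:ℕ)) *
              ((α i : ℂ) * (q:ℂ) ^ (Function.update x i (x i - 1) i + 1) - 1) *
              f (Function.update (Function.update x i (x i - 1)) i
                  (Function.update x i (x i - 1) i + 1))))
        + ∑ i : Fin h, ∑ j : Fin h,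
          (if j ≠ i then
            (q:ℂ) ^ ((Xlt x (i:ℕ) : ℤ) - M - 1) * (1 - (q:ℂ) ^ (x i)) *
              (((Apar α (j:ℕ) : ℝ):ℂ) *
                (q:ℂ) ^ ((j:ℕ) + Xlt (Function.update x i (x i - 1)) (j:ℕ)) *
                ((α j : ℂ) * (q:ℂ) ^ (Function.update x i (x i - 1) j + 1) - 1) *
                f (Function.update (Function.update x i (x i - 1)) j
                    (Function.update x i (x i - 1) j + 1)))
           else 0) := sum_split _
    _ = (∑ i : Fin h,
          ((Apar α (i:ℕ) : ℝ):ℂ) *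
            (q:ℂ) ^ ((((i:ℕ) + 2 * Xlt x (i:ℕ) : ℕ):ℤ) - (M + 1 : ℕ)) *
            ((α i : ℂ) * (q:ℂ) ^ (x i) - 1) * (1 - (q:ℂ) ^ (x i)) * f x)
        + ∑ i : Fin h, ∑ j : Fin h,
          (if i ≠ j then
            ((Apar α (j:ℕ) : ℝ):ℂ) *
              (q:ℂ) ^ ((((j:ℕ) + Xlt x (j:ℕ) + Xlt x (i:ℕ) : ℕ):ℤ) - (M + 1 : ℕ) -
                (if (i:ℕ) < (j:ℕ) then 1 else 0)) *
              ((α j : ℂ) * (q:ℂ) ^ (x j + 1) - 1) * (1 - (q:ℂ) ^ (x i)) *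
              f (Function.update (Function.update x j (x j + 1)) i (x i - 1))
           else 0) := by
        congr 1
        · exact Finset.sum_congr rfl fun i _ => diag i
        · refine Finset.sum_congr rfl fun i _ => Finset.sum_congr rfl fun j _ => ?_
          by_cases hji : j = i
          · simp [hji]
          · rw [if_pos hji, if_pos (fun hc => hji hc.symm : i ≠ j)]
            exact pair i j hji
    _ = Dop q α (M + 1) f x -
          (((Apar α h : ℝ) : ℂ) * (q : ℂ) ^ (((h + (M + 1) : ℕ) : ℤ) - 1) - 1) *
            (1 - (q : ℂ) ^ (-((M + 1 : ℕ) : ℤ))) * f x := by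
        simp only [Dop]
        rw [← Finset.sum_mul]
        ring


theorem stmt1 (q : ℝ) (hq0 : 0 < q) (hq1 : q < 1) (h : ℕ) (hh : 1 ≤ h)
    (α : Fin h → ℝ) (hα : ∀ i, 0 < α i) (N : ℕ) (f : (Fin h → ℕ) → ℂ) :
    (∀ x : Fin h → ℕ, (∑ i, x i) = N →
      Lop q α (Rop q N f) x =
        Dop q α N f x -
          (1 - (q : ℂ) ^ (-(N : ℤ) - 1)) *
            (((Apar α h : ℝ) : ℂ) * (q : ℂ) ^ (N + h) - 1) * f x) ∧
    (1 ≤ N → ∀ x : Fin h → ℕ, (∑ i, x i) = N →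
      Lop q α (Rop q N f) x - Rop q (N - 1) (Lop q α f) x =
        (q : ℂ) ^ (-(N : ℤ) - 1) * (1 - (q : ℂ)) *
          (((Apar α h : ℝ) : ℂ) * (q : ℂ) ^ (2 * N + h) - 1) * f x) := by
  have hq : (q : ℂ) ≠ 0 := Complex.ofReal_ne_zero.mpr (ne_of_gt hq0)
  constructor
  · intro x hx
    exact lemA q hq α N f x hx
  · intro hN x hx
    rw [lemA q hq α N f x hx, lemB q hq α N hN f x hx]
    have hm : (q:ℂ) ^ (-(N:ℤ) - 1) = ((q:ℂ)^N * q)⁻¹ := by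
      rw [show -(N:ℤ) - 1 = -((N:ℤ) + 1) by ring, zpow_neg, zpow_add₀ hq, zpow_natCast, zpow_one]
    have hmN : (q:ℂ) ^ (-(N:ℤ)) = ((q:ℂ)^N)⁻¹ := by
      rw [zpow_neg, zpow_natCast]
    rw [hm, hmN, zpow_sub₀ hq, zpow_natCast, zpow_one]
    field_simp
    ring
end
end

section
/- For every integer N≥1, every f_1∈V_{h,N} and every f_2∈V_{h,N−1}, one has ⟨L_N f_1, f_2⟩_{V_{h,N−1}} = −⟨f_1, R_{N−1} f_2⟩_{V_{h,N}}. Moreover, for every N≥0 and all f_1,f_2∈V_{h,N}, the q-Hahn operator is self-adjoint: ⟨D_N f_1, f_2⟩_{V_{h,N}} = ⟨f_1, D_N f_2⟩_{V_{h,N}}. -/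
open Finset

noncomputable section

/-!
The weights of the scalar product satisfy a detailed-balance relation: raising the `j`-th
coordinate of `x ∈ [h;N-1]` multiplies the weight by
`A_j q^j (1 - α_j q^(x_j+1)) / (1 - q^(x_j+1))`, which is exactly the ratio of the
coefficients of `L_N` and `R_{N-1}` linking `x` and `x + e_j`. Reindexing the `j`-th part of
`⟨f₁, R_{N-1} f₂⟩` by `y = x + e_j` therefore yields `-⟨L_N f₁, f₂⟩`.
For self-adjointness, `D_N = R_{N-1} L_N + c_N` with a real constant `c_N` (and `D_0` vanishes
on `[h;0]`), so `⟨D_N f₁, f₂⟩ = -⟨L_N f₁, L_N f₂⟩ + c_N ⟨f₁, f₂⟩`, which is Hermitian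
symmetric.
-/

namespace QHahn

open Function

variable {h : ℕ} {q : ℝ} {α : Fin h → ℝ}

lemma Xlt_update_add (x : Fin h → ℕ) (j : Fin h) (v k : ℕ) :
    Xlt (update x j v) k + (if (j : ℕ) < k then x j else 0) =
      Xlt x k + (if (j : ℕ) < k then v else 0) := by
  simp only [Xlt]
  rw [← add_sum_erase _ _ (mem_univ j), ← add_sum_erase _ _ (mem_univ j),
    sum_congr rfl fun i hi => by rw [update_of_ne (ne_of_mem_erase hi)], update_self]
  ring

lemma Xlt_update_succ (x : Fin h → ℕ) (j : Fin h) (k : ℕ) :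
    Xlt (update x j (x j + 1)) k = Xlt x k + if (j : ℕ) < k then 1 else 0 := by
  have := Xlt_update_add x j (x j + 1) k
  split_ifs at this ⊢ <;> omega

lemma Xlt_update_pred (x : Fin h → ℕ) (i : Fin h) (hx : x i ≠ 0) (k : ℕ) :
    Xlt (update x i (x i - 1)) k + (if (i : ℕ) < k then 1 else 0) = Xlt x k := by
  have := Xlt_update_add x i (x i - 1) k
  split_ifs at this ⊢ <;> omega

lemma sum_update_add (x : Fin h → ℕ) (j : Fin h) (v : ℕ) :
    ∑ i, update x j v i + x j = ∑ i, x i + v := by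
  rw [← add_sum_erase _ _ (mem_univ j), ← add_sum_erase _ _ (mem_univ j),
    sum_congr rfl fun i hi => by rw [update_of_ne (ne_of_mem_erase hi)], update_self]
  ring

lemma sum_antidiagonalTuple_succ {β : Type*} [AddCommMonoid β] (M : ℕ) (j : Fin h)
    (g : (Fin h → ℕ) → β) (hg : ∀ y, y j = 0 → g y = 0) :
    ∑ y ∈ Nat.antidiagonalTuple h (M + 1), g y =
      ∑ x ∈ Nat.antidiagonalTuple h M, g (update x j (x j + 1)) := by
  rw [← sum_filter_of_ne (p := fun y => y j ≠ 0) fun y _ hy hj => hy (hg y hj)]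
  refine (sum_nbij' (fun x => update x j (x j + 1)) (fun y => update y j (y j - 1))
    ?_ ?_ ?_ ?_ fun _ _ => rfl).symm
  · intro x hx
    have := sum_update_add x j (x j + 1)
    simp only [mem_filter, Nat.mem_antidiagonalTuple, update_self] at hx ⊢
    omega
  · intro y hy
    have := sum_update_add y j (y j - 1)
    simp only [mem_filter, Nat.mem_antidiagonalTuple] at hy ⊢
    omega
  · intro x _
    simp
  · intro y hy
    simp only [mem_filter] at hy
    simp [Nat.sub_add_cancel (Nat.one_le_iff_ne_zero.mpr hy.2)]

lemma prod_ite_lt_eq_pow {M : Type*} [CommMonoid M] (c : M) (j : Fin h) :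
    ∏ i : Fin h, (if (i : ℕ) < j then c else 1) = c ^ (j : ℕ) := by
  rw [prod_ite, prod_const, prod_const_one, mul_one, ← Fin.card_Iio j]
  congr 2
  ext i
  simp

lemma qPoch_ratio_succ (q a : ℝ) (m : ℕ) :
    qPoch q (q * a) (m + 1) / qPoch q q (m + 1) =
      qPoch q (q * a) m / qPoch q q m * ((1 - a * q ^ (m + 1)) / (1 - q ^ (m + 1))) := by
  simp only [qPoch, prod_range_succ, mul_div_mul_comm]
  ring_nf

def weight (q : ℝ) (α : Fin h → ℝ) (N : ℕ) (x : Fin h → ℕ) : ℝ :=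
  ∏ i : Fin h, qPoch q (q * α i) (x i) / qPoch q q (x i) *
    (α i * q) ^ ((N : ℤ) - Xlt x ((i : ℕ) + 1))

lemma innerV_eq_sum_weight (q : ℝ) (α : Fin h → ℝ) (N : ℕ) (f g : (Fin h → ℕ) → ℂ) :
    innerV q α N f g = (q : ℂ) ^ (N * (N + 1) / 2) *
      ∑ x ∈ Nat.antidiagonalTuple h N,
        (weight q α N x : ℂ) * f x * starRingEnd ℂ (g x) := by
  simp [innerV, weight]

lemma weight_factor_update_succ (hq : q ≠ 0) (hα : ∀ i, α i ≠ 0) (M : ℕ) (x : Fin h → ℕ)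
    (i j : Fin h) :
    qPoch q (q * α i) (update x j (x j + 1) i) / qPoch q q (update x j (x j + 1) i) *
        (α i * q) ^ (((M + 1 : ℕ) : ℤ) - Xlt (update x j (x j + 1)) ((i : ℕ) + 1)) =
      qPoch q (q * α i) (x i) / qPoch q q (x i) *
          (α i * q) ^ ((M : ℤ) - Xlt x ((i : ℕ) + 1)) *
        ((if i = j then (1 - α j * q ^ (x j + 1)) / (1 - q ^ (x j + 1)) else 1) *
          ((if (i : ℕ) < j then α i else 1) * (if (i : ℕ) < j then q else 1))) := by
  rw [Xlt_update_succ]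
  rcases eq_or_ne i j with rfl | hij
  · simp only [update_self, qPoch_ratio_succ, lt_irrefl, if_true, if_false,
      lt_add_iff_pos_right, Nat.lt_one_iff]
    push_cast
    ring_nf
  · rw [update_of_ne hij, if_neg hij]
    rcases lt_or_gt_of_ne (Fin.val_ne_of_ne hij) with hlt | hgt
    · rw [if_neg (by omega), if_pos hlt, if_pos hlt, add_zero, Nat.cast_succ,
        add_sub_right_comm, zpow_add_one₀ (mul_ne_zero (hα i) hq)]
      ring
    · rw [if_pos (by omega), if_neg (by omega), if_neg (by omega)]
      push_cast
      ring_nf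

lemma weight_update_succ (hq : q ≠ 0) (hα : ∀ i, α i ≠ 0) (M : ℕ) (x : Fin h → ℕ)
    (j : Fin h) :
    weight q α (M + 1) (update x j (x j + 1)) =
      weight q α M x * (Apar α j * q ^ (j : ℕ)) *
        ((1 - α j * q ^ (x j + 1)) / (1 - q ^ (x j + 1))) := by
  simp only [weight, weight_factor_update_succ hq hα, prod_mul_distrib, prod_ite_eq',
    mem_univ, if_true, prod_ite_lt_eq_pow, Apar]
  ring

lemma weight_balance (hq0 : 0 < q) (hq1 : q < 1) (hα : ∀ i, α i ≠ 0) (M : ℕ)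
    (x : Fin h → ℕ) (j : Fin h) :
    q ^ ((M + 1) * (M + 1 + 1) / 2) * weight q α (M + 1) (update x j (x j + 1)) *
        (q ^ ((Xlt x j : ℤ) - M - 1) * (1 - q ^ (x j + 1))) =
      q ^ (M * (M + 1) / 2) * weight q α M x *
        (Apar α j * q ^ ((j : ℕ) + Xlt x j) * (1 - α j * q ^ (x j + 1))) := by
  have hden : 1 - q ^ (x j + 1) ≠ 0 :=
    (sub_pos.2 (pow_lt_one₀ hq0.le hq1 (Nat.succ_ne_zero _))).ne'
  have hpow : q ^ (M + 1) * q ^ ((Xlt x j : ℤ) - M - 1) = q ^ Xlt x j := by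
    rw [← zpow_natCast, ← zpow_add₀ hq0.ne', ← zpow_natCast]
    congr 1
    push_cast
    ring
  have htri : (M + 1) * (M + 1 + 1) / 2 = M * (M + 1) / 2 + (M + 1) := by
    simpa [mul_comm] using Nat.triangle_succ (M + 1)
  rw [htri, weight_update_succ hq0.ne' hα, pow_add, pow_add q j, ← hpow]
  field_simp

lemma innerV_Lop_eq_neg_innerV_Rop (hq0 : 0 < q) (hq1 : q < 1) (hα : ∀ i, α i ≠ 0) (M : ℕ)
    (f₁ f₂ : (Fin h → ℕ) → ℂ) :
    innerV q α M (Lop q α f₁) f₂ = -innerV q α (M + 1) f₁ (Rop q M f₂) := by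
  have hL : innerV q α M (Lop q α f₁) f₂ = ∑ j : Fin h, ∑ x ∈ Nat.antidiagonalTuple h M,
      (q : ℂ) ^ (M * (M + 1) / 2) * weight q α M x *
        ((Apar α j : ℂ) * (q : ℂ) ^ ((j : ℕ) + Xlt x j) *
          ((α j : ℂ) * (q : ℂ) ^ (x j + 1) - 1)) *
        f₁ (update x j (x j + 1)) * starRingEnd ℂ (f₂ x) := by
    simp only [innerV_eq_sum_weight, Lop, mul_sum, sum_mul]
    rw [sum_comm]
    exact sum_congr rfl fun _ _ => sum_congr rfl fun _ _ => by ring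
  have hR : innerV q α (M + 1) f₁ (Rop q M f₂) =
      ∑ j : Fin h, ∑ y ∈ Nat.antidiagonalTuple h (M + 1),
      (q : ℂ) ^ ((M + 1) * (M + 1 + 1) / 2) * weight q α (M + 1) y *
        ((q : ℂ) ^ ((Xlt y j : ℤ) - M - 1) * (1 - (q : ℂ) ^ (y j))) *
        f₁ y * starRingEnd ℂ (f₂ (update y j (y j - 1))) := by
    simp only [innerV_eq_sum_weight, Rop, map_sum, map_mul, map_sub, map_one, map_pow,
      map_zpow₀, Complex.conj_ofReal, mul_sum]
    rw [sum_comm]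
    exact sum_congr rfl fun _ _ => sum_congr rfl fun _ _ => by ring
  rw [hL, hR, ← sum_neg_distrib]
  refine sum_congr rfl fun j _ => ?_
  rw [sum_antidiagonalTuple_succ M j _ fun y hy => by simp [hy], ← sum_neg_distrib]
  refine sum_congr rfl fun x _ => ?_
  have hbal := congrArg (fun r : ℝ => (r : ℂ)) (weight_balance hq0 hq1 hα M x j)
  push_cast at hbal
  simp only [update_self, update_idem, Nat.add_sub_cancel, update_eq_self, Xlt_update_succ,
    lt_irrefl, if_false, add_zero]
  linear_combination (f₁ (update x j (x j + 1)) * starRingEnd ℂ (f₂ x)) * hbal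

lemma sum_eq_sum_ite_ne_add {ι β : Type*} [Fintype ι] [DecidableEq ι] [AddCommMonoid β]
    (g : ι → β) (i : ι) : ∑ j, g j = (∑ j, if i ≠ j then g j else 0) + g i := by
  rw [← sum_filter, filter_ne, sum_erase_add _ _ (mem_univ i)]

lemma Rop_Lop_term_of_ne (hq : q ≠ 0) (M : ℕ) (f : (Fin h → ℕ) → ℂ) (x : Fin h → ℕ)
    {i j : Fin h} (hij : i ≠ j) :
    (q : ℂ) ^ ((Xlt x i : ℤ) - M - 1) * (1 - (q : ℂ) ^ (x i)) *
        ((Apar α j : ℂ) * (q : ℂ) ^ ((j : ℕ) + Xlt (update x i (x i - 1)) j) *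
          ((α j : ℂ) * (q : ℂ) ^ (update x i (x i - 1) j + 1) - 1) *
          f (update (update x i (x i - 1)) j (update x i (x i - 1) j + 1))) =
      (Apar α j : ℂ) *
          (q : ℂ) ^ ((((j : ℕ) + Xlt x j + Xlt x i : ℕ) : ℤ) - (M + 1 : ℕ) -
            (if (i : ℕ) < j then 1 else 0)) *
        ((α j : ℂ) * (q : ℂ) ^ (x j + 1) - 1) * (1 - (q : ℂ) ^ (x i)) *
        f (update (update x j (x j + 1)) i (x i - 1)) := by
  -- `x i - 1` truncates at `0`, but there the factor `1 - q ^ x i` vanishes.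
  rcases eq_or_ne (x i) 0 with hxi | hxi
  · simp [hxi]
  have hexp : (q : ℂ) ^ ((Xlt x i : ℤ) - M - 1) *
        (q : ℂ) ^ ((j : ℕ) + Xlt (update x i (x i - 1)) j) =
      (q : ℂ) ^ ((((j : ℕ) + Xlt x j + Xlt x i : ℕ) : ℤ) - (M + 1 : ℕ) -
          (if (i : ℕ) < j then 1 else 0)) := by
    have := Xlt_update_pred x i hxi j
    rw [← zpow_natCast, ← zpow_add₀ (by exact_mod_cast hq)]
    congr 1
    split_ifs at this ⊢ <;> push_cast <;> omega
  rw [update_of_ne hij.symm, update_comm hij.symm, ← hexp]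
  ring

lemma Rop_Lop_term_self (hq : q ≠ 0) (M : ℕ) (f : (Fin h → ℕ) → ℂ) (x : Fin h → ℕ)
    (i : Fin h) :
    (q : ℂ) ^ ((Xlt x i : ℤ) - M - 1) * (1 - (q : ℂ) ^ (x i)) *
        ((Apar α i : ℂ) * (q : ℂ) ^ ((i : ℕ) + Xlt (update x i (x i - 1)) i) *
          ((α i : ℂ) * (q : ℂ) ^ (update x i (x i - 1) i + 1) - 1) *
          f (update (update x i (x i - 1)) i (update x i (x i - 1) i + 1))) =
      (Apar α i : ℂ) * (q : ℂ) ^ ((((i : ℕ) + 2 * Xlt x i : ℕ) : ℤ) - (M + 1 : ℕ)) *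
        ((α i : ℂ) * (q : ℂ) ^ (x i) - 1) * (1 - (q : ℂ) ^ (x i)) * f x := by
  rcases eq_or_ne (x i) 0 with hxi | hxi
  · simp [hxi]
  have hexp : (q : ℂ) ^ ((Xlt x i : ℤ) - M - 1) *
        (q : ℂ) ^ ((i : ℕ) + Xlt (update x i (x i - 1)) i) =
      (q : ℂ) ^ ((((i : ℕ) + 2 * Xlt x i : ℕ) : ℤ) - (M + 1 : ℕ)) := by
    have := Xlt_update_pred x i hxi i
    rw [if_neg (lt_irrefl _), add_zero] at this
    rw [← zpow_natCast, ← zpow_add₀ (by exact_mod_cast hq), this]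
    congr 1
    push_cast
    ring
  rw [update_self, update_idem, Nat.sub_add_cancel (Nat.one_le_iff_ne_zero.2 hxi),
    update_eq_self, ← hexp]
  ring

def DopConst (q : ℝ) (α : Fin h → ℝ) (N : ℕ) : ℝ :=
  (Apar α h * q ^ (((h + N : ℕ) : ℤ) - 1) - 1) * (1 - q ^ (-(N : ℤ)))

theorem Dop_succ_eq (hq : q ≠ 0) (M : ℕ) (f : (Fin h → ℕ) → ℂ) :
    Dop q α (M + 1) f = Rop q M (Lop q α f) + (DopConst q α (M + 1) : ℂ) • f := by
  funext x
  simp only [Dop, Rop, Lop, mul_sum, Pi.add_apply, Pi.smul_apply, smul_eq_mul, DopConst]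
  rw [add_mul, sum_mul, ← add_assoc, ← sum_add_distrib]
  congr 1
  · refine sum_congr rfl fun i _ => ?_
    conv_rhs => rw [sum_eq_sum_ite_ne_add _ i]
    congr 1
    · refine sum_congr rfl fun j _ => ?_
      by_cases hij : i ≠ j
      · rw [if_pos hij, if_pos hij, Rop_Lop_term_of_ne hq M f x hij]
      · rw [if_neg hij, if_neg hij]
    · exact (Rop_Lop_term_self hq M f x i).symm
  · push_cast
    rfl

lemma Dop_zero_apply (f : (Fin h → ℕ) → ℂ) {x : Fin h → ℕ}
    (hx : x ∈ Nat.antidiagonalTuple h 0) : Dop q α 0 f x = 0 := by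
  rw [Nat.antidiagonalTuple_zero_right, mem_singleton] at hx
  simp [Dop, hx]

lemma innerV_conj_symm {N : ℕ} (f g : (Fin h → ℕ) → ℂ) :
    starRingEnd ℂ (innerV q α N g f) = innerV q α N f g := by
  simp only [innerV_eq_sum_weight, map_mul, map_sum, map_pow, Complex.conj_ofReal,
    Complex.conj_conj]
  exact congrArg _ (sum_congr rfl fun _ _ => by ring)

lemma innerV_add_left {N : ℕ} (f f' g : (Fin h → ℕ) → ℂ) :
    innerV q α N (f + f') g = innerV q α N f g + innerV q α N f' g := by
  simp only [innerV_eq_sum_weight, Pi.add_apply, mul_add, add_mul, sum_add_distrib]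

lemma innerV_smul_left {N : ℕ} (c : ℂ) (f g : (Fin h → ℕ) → ℂ) :
    innerV q α N (c • f) g = c * innerV q α N f g := by
  simp only [innerV_eq_sum_weight, Pi.smul_apply, smul_eq_mul, mul_sum]
  exact sum_congr rfl fun _ _ => by ring

lemma innerV_Dop_succ_left (hq0 : 0 < q) (hq1 : q < 1) (hα : ∀ i, α i ≠ 0) (M : ℕ)
    (f g : (Fin h → ℕ) → ℂ) :
    innerV q α (M + 1) (Dop q α (M + 1) f) g =
      -innerV q α M (Lop q α f) (Lop q α g) +
        DopConst q α (M + 1) * innerV q α (M + 1) f g := by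
  rw [Dop_succ_eq hq0.ne', innerV_add_left, innerV_smul_left, ← innerV_conj_symm,
    ← neg_eq_iff_eq_neg.mpr (innerV_Lop_eq_neg_innerV_Rop hq0 hq1 hα M g (Lop q α f)),
    map_neg, innerV_conj_symm]

theorem innerV_Dop_comm (hq0 : 0 < q) (hq1 : q < 1) (hα : ∀ i, α i ≠ 0) (N : ℕ)
    (f₁ f₂ : (Fin h → ℕ) → ℂ) :
    innerV q α N (Dop q α N f₁) f₂ = innerV q α N f₁ (Dop q α N f₂) := by
  rw [← innerV_conj_symm f₁]
  rcases N with _ | M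
  · have hD : ∀ f g, innerV q α 0 (Dop q α 0 f) g = 0 := fun f g => by
      rw [innerV_eq_sum_weight, sum_eq_zero fun x hx => by
        rw [Dop_zero_apply f hx, mul_zero, zero_mul], mul_zero]
    rw [hD, hD, map_zero]
  · rw [innerV_Dop_succ_left hq0 hq1 hα, innerV_Dop_succ_left hq0 hq1 hα, map_add, map_neg,
      map_mul, innerV_conj_symm, innerV_conj_symm, Complex.conj_ofReal]

end QHahn

theorem stmt2_general (q : ℝ) (hq0 : 0 < q) (hq1 : q < 1) (h : ℕ)
    (α : Fin h → ℝ) (hα : ∀ i, 0 < α i) :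
    (∀ N : ℕ, 1 ≤ N → ∀ f₁ f₂ : (Fin h → ℕ) → ℂ,
      innerV q α (N - 1) (Lop q α f₁) f₂ = -innerV q α N f₁ (Rop q (N - 1) f₂)) ∧
    (∀ N : ℕ, ∀ f₁ f₂ : (Fin h → ℕ) → ℂ,
      innerV q α N (Dop q α N f₁) f₂ = innerV q α N f₁ (Dop q α N f₂)) := by
  have hα' : ∀ i, α i ≠ 0 := fun i => (hα i).ne'
  refine ⟨fun N hN f₁ f₂ => ?_, QHahn.innerV_Dop_comm hq0 hq1 hα'⟩
  obtain ⟨M, rfl⟩ := Nat.exists_eq_add_of_le' hN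
  exact QHahn.innerV_Lop_eq_neg_innerV_Rop hq0 hq1 hα' M f₁ f₂

theorem stmt2 (q : ℝ) (hq0 : 0 < q) (hq1 : q < 1) (h : ℕ) (hh : 1 ≤ h)
    (α : Fin h → ℝ) (hα : ∀ i, 0 < α i) :
    (∀ N : ℕ, 1 ≤ N → ∀ f₁ f₂ : (Fin h → ℕ) → ℂ,
      innerV q α (N - 1) (Lop q α f₁) f₂ = -innerV q α N f₁ (Rop q (N - 1) f₂)) ∧
    (∀ N : ℕ, ∀ f₁ f₂ : (Fin h → ℕ) → ℂ,
      innerV q α N (Dop q α N f₁) f₂ = innerV q α N f₁ (Dop q α N f₂)) :=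
  stmt2_general q hq0 hq1 h α hα
end
end
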